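/- The natural 7-dimensional complex representation of the group ⟨P_α, P_β, N₁⟩ ≤ GL₇(ℚ) is irreducible: the only ℂ-linear subspaces of ℂ⁷ that are invariant under the three matrices P_α, P_β and N₁ (viewed as complex matrices) are {0} and ℂ⁷. -/

import Mathlib

/-!
The conjugates `αᵏ N₁ α⁻ᵏ` are diagonal sign matrices whose sign patterns separate the seven
coordinates. The diagonal matrices preserving an invariant subspace `W` form an algebra, and an
algebra of functions on a finite set that separates points is everything; so `W` is stable under
all coordinate projections and is spanned by standard basis vectors. Since `α` permutes the
coordinates transitively, `W` is `0` or `ℂ⁷`.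
-/

open Matrix Equiv

/-- `PSL₂(7)`: the quotient of `SL(2, ℤ/7ℤ)` by its center. -/
abbrev PSL₂7 : Type :=
  Matrix.SpecialLinearGroup (Fin 2) (ZMod 7) ⧸
    Subgroup.center (Matrix.SpecialLinearGroup (Fin 2) (ZMod 7))

/-- The permutation matrix of `σ` (sending the basis vector `eⱼ` to `e_{σ j}`),
as an element of `GL₇(ℚ)`.  (We index the basis `e₁, …, e₇` of the paper by `Fin 7`,
so `e_{i+1}` corresponds to index `i`.) -/
def permGL (σ : Equiv.Perm (Fin 7)) : GL (Fin 7) ℚ :=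
  ⟨(σ⁻¹).permMatrix ℚ, σ.permMatrix ℚ,
    by rw [← PEquiv.toMatrix_trans, ← Equiv.toPEquiv_trans]
       simp [Equiv.Perm.inv_def, Equiv.toPEquiv_refl],
    by rw [← PEquiv.toMatrix_trans, ← Equiv.toPEquiv_trans]
       simp [Equiv.Perm.inv_def, Equiv.toPEquiv_refl]⟩

theorem diag_mul_self (v : Fin 7 → ℚ) (h : ∀ i, v i * v i = 1) :
    Matrix.diagonal v * Matrix.diagonal v = 1 := by
  rw [Matrix.diagonal_mul_diagonal]
  have hv : (fun i => v i * v i) = fun _ => (1 : ℚ) := funext h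
  rw [hv]
  exact Matrix.diagonal_one

/-- A diagonal `±1` matrix as an element of `GL₇(ℚ)`. -/
def diagGL (v : Fin 7 → ℚ) (h : ∀ i, v i * v i = 1) : GL (Fin 7) ℚ :=
  ⟨Matrix.diagonal v, Matrix.diagonal v, diag_mul_self v h, diag_mul_self v h⟩

/-- `α`, the 7-cycle `(1 2 4 3 6 5 7)` of the paper, written 0-indexed on `Fin 7`. -/
def α : Equiv.Perm (Fin 7) := c[0, 1, 3, 2, 5, 4, 6]

/-- `β = (2 4 6)(3 7 5)` of the paper, written 0-indexed on `Fin 7`. -/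
def β : Equiv.Perm (Fin 7) := c[1, 3, 5] * c[2, 6, 4]

def N₁ : GL (Fin 7) ℚ :=
  diagGL ![1, 1, 1, -1, -1, -1, -1] (by intro i; fin_cases i <;> norm_num [Matrix.cons_val_succ])

/-- A rational matrix viewed as a complex matrix. -/
noncomputable def toC (A : Matrix (Fin 7) (Fin 7) ℚ) : Matrix (Fin 7) (Fin 7) ℂ :=
  A.map (fun x => (x : ℂ))

def Submodule.multipliers {R ι : Type*} [CommSemiring R] (W : Submodule R (ι → R)) :
    Subalgebra R (ι → R) where
  carrier := {f | ∀ w ∈ W, f * w ∈ W}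
  mul_mem' hf hg w hw := by rw [mul_assoc]; exact hf _ (hg w hw)
  add_mem' hf hg w hw := by rw [add_mul]; exact W.add_mem (hf w hw) (hg w hw)
  algebraMap_mem' c w hw := by
    rw [Algebra.algebraMap_eq_smul_one, smul_one_mul]; exact W.smul_mem c hw

theorem Subalgebra.eq_top_of_separatesPoints {K ι : Type*} [Field K] [Fintype ι] [DecidableEq ι]
    (S : Subalgebra K (ι → K)) (hS : ∀ i j, i ≠ j → ∃ f ∈ S, f i ≠ f j) : S = ⊤ := by
  have hsingle (i : ι) : Pi.single i 1 ∈ S := by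
    choose f hfS hf using fun j : {j // j ≠ i} => hS i j (Ne.symm j.2)
    -- a Lagrange-type product: the `j`-th factor is `1` at `i` and `0` at `j`
    let g (j : {j // j ≠ i}) : ι → K :=
      (f j i - f j j)⁻¹ • (f j - algebraMap K (ι → K) (f j j))
    have hg : Pi.single i 1 = ∏ j, g j := by
      funext x
      rw [Finset.prod_apply]
      by_cases hx : x = i
      · subst hx
        simp [g, inv_mul_cancel₀ (sub_ne_zero.2 (hf _))]
      · rw [Pi.single_eq_of_ne hx]
        exact (Finset.prod_eq_zero (Finset.mem_univ ⟨x, hx⟩) (by simp [g])).symm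
    rw [hg]
    exact S.prod_mem fun j _ => S.smul_mem (S.sub_mem (hfS j) (S.algebraMap_mem _)) _
  refine eq_top_iff.2 fun f _ => ?_
  rw [pi_eq_sum_univ' f]
  exact S.sum_mem fun i _ => S.smul_mem (hsingle i) _

namespace Submodule

variable {K ι : Type*} [Field K] {W : Submodule K (ι → K)} {σ : Equiv.Perm ι}

theorem comp_perm_pow_mem (hσ : ∀ w ∈ W, w ∘ σ ∈ W) (n : ℕ) {w : ι → K} (hw : w ∈ W) :
    w ∘ ⇑(σ ^ n) ∈ W := by
  induction n generalizing w with
  | zero => simpa using hw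
  | succ n ih =>
    rw [pow_succ, Equiv.Perm.coe_mul, ← Function.comp_assoc]
    exact hσ _ (ih hw)

theorem comp_perm_inv_mem [Finite ι] (hσ : ∀ w ∈ W, w ∘ σ ∈ W) {w : ι → K} (hw : w ∈ W) :
    w ∘ ⇑σ⁻¹ ∈ W := by
  obtain ⟨n, hn⟩ := mem_powers_iff_mem_zpowers.2 (inv_mem (Subgroup.mem_zpowers σ))
  exact hn ▸ comp_perm_pow_mem hσ n hw

theorem comp_perm_mem_multipliers [Finite ι] (hσ : ∀ w ∈ W, w ∘ σ ∈ W) {f : ι → K}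
    (hf : f ∈ W.multipliers) : f ∘ σ ∈ W.multipliers := by
  intro w hw
  have h := hσ _ (hf _ (comp_perm_inv_mem hσ hw))
  convert h using 1
  funext x
  simp

theorem comp_perm_pow_mem_multipliers [Finite ι] (hσ : ∀ w ∈ W, w ∘ σ ∈ W) (n : ℕ)
    {f : ι → K} (hf : f ∈ W.multipliers) : f ∘ ⇑(σ ^ n) ∈ W.multipliers :=
  comp_perm_pow_mem (W := Subalgebra.toSubmodule W.multipliers)
    (fun _ => comp_perm_mem_multipliers hσ) n hf

theorem single_mem_of_multipliers_eq_top [DecidableEq ι] (h : W.multipliers = ⊤) {w : ι → K}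
    (hw : w ∈ W) (i : ι) : Pi.single i (w i) ∈ W := by
  have hi : Pi.single i (1 : K) ∈ W.multipliers := h ▸ Algebra.mem_top
  rw [← one_mul (w i), Pi.single_mul_left]
  exact hi w hw

theorem eq_bot_or_eq_top_of_multipliers_eq_top [Fintype ι] [DecidableEq ι]
    (h : W.multipliers = ⊤) (hσ : ∀ w ∈ W, w ∘ σ ∈ W)
    (htrans : ∀ i j, ∃ n : ℕ, (σ ^ n) i = j) : W = ⊥ ∨ W = ⊤ := by
  refine (eq_or_ne W ⊥).imp id fun hW => ?_
  obtain ⟨w, hw, hw0⟩ := exists_mem_ne_zero_of_ne_bot hW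
  obtain ⟨i, hi⟩ := Function.ne_iff.1 hw0
  have hsingle (j : ι) : Pi.single j 1 ∈ W := by
    obtain ⟨n, hn⟩ := htrans j i
    have h₁ := W.smul_mem (w i)⁻¹ (single_mem_of_multipliers_eq_top h hw i)
    have h₂ := comp_perm_pow_mem hσ n h₁
    rwa [← Pi.single_smul', smul_eq_mul, inv_mul_cancel₀ hi, Pi.single_comp_equiv, ← hn,
      Equiv.symm_apply_apply] at h₂
  refine eq_top_iff'.2 fun x => ?_
  rw [pi_eq_sum_univ' x]
  exact W.sum_mem fun j _ => W.smul_mem _ (hsingle j)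

end Submodule

theorem toC_permGL_mulVec (σ : Equiv.Perm (Fin 7)) (w : Fin 7 → ℂ) :
    (toC (permGL σ).val).mulVec w = w ∘ ⇑σ⁻¹ := by
  have h : toC (permGL σ).val = σ⁻¹.permMatrix ℂ :=
    PEquiv.map_toMatrix (Rat.castHom ℂ) _
  rw [h, permMatrix_mulVec]

theorem toC_N₁_mulVec (w : Fin 7 → ℂ) :
    (toC N₁.val).mulVec w = (fun i => (N₁.val i i : ℂ)) * w := by
  have h : toC N₁.val = diagonal fun i => (N₁.val i i : ℂ) := by
    ext i j
    by_cases hij : i = j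
    · subst hij; simp [toC]
    · simp [toC, N₁, diagGL, hij]
  funext i
  rw [h, mulVec_diagonal, Pi.mul_apply]

theorem N₁_conj_alpha_pow_separatesPoints : ∀ i j : Fin 7, i ≠ j → ∃ k : Fin 7,
    N₁.val ((α⁻¹ ^ (k : ℕ)) i) ((α⁻¹ ^ (k : ℕ)) i) ≠
      N₁.val ((α⁻¹ ^ (k : ℕ)) j) ((α⁻¹ ^ (k : ℕ)) j) := by
  decide

theorem alpha_inv_pow_transitive : ∀ i j : Fin 7, ∃ k : ℕ, (α⁻¹ ^ k) i = j := by
  intro i j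
  obtain ⟨k, hk⟩ : ∃ k : Fin 7, (α⁻¹ ^ (k : ℕ)) i = j := by revert i j; decide
  exact ⟨k, hk⟩

theorem stmt4 :
    ∀ W : Submodule ℂ (Fin 7 → ℂ),
      (∀ w ∈ W, (toC (permGL α).val).mulVec w ∈ W) →
      (∀ w ∈ W, (toC (permGL β).val).mulVec w ∈ W) →
      (∀ w ∈ W, (toC N₁.val).mulVec w ∈ W) →
      W = ⊥ ∨ W = ⊤ := by
  intro W hα _ hN
  have hshift : ∀ w ∈ W, w ∘ ⇑α⁻¹ ∈ W := fun w hw => toC_permGL_mulVec α w ▸ hα w hw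
  have hsign : (fun i => (N₁.val i i : ℂ)) ∈ W.multipliers :=
    fun w hw => toC_N₁_mulVec w ▸ hN w hw
  have hmult : W.multipliers = ⊤ := by
    refine Subalgebra.eq_top_of_separatesPoints _ fun i j hij => ?_
    obtain ⟨k, hk⟩ := N₁_conj_alpha_pow_separatesPoints i j hij
    exact ⟨_, Submodule.comp_perm_pow_mem_multipliers hshift k hsign,
      by simpa using (Rat.cast_injective (α := ℂ)).ne hk⟩
  exact W.eq_bot_or_eq_top_of_multipliers_eq_top hmult hshift alpha_inv_pow_transitive
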